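/- arXiv:2407.19275 — 3 statements merged into one kernel-verified Lean document; each statement's English description precedes it below -/
import Mathlib

section
/- Let r ≥ 1, N ≥ 3 and 1 ≤ k ≤ (N−1)/2 be integers, and define for t ∈ ℝ the series C(t) = k^{−(1+r)}·cos(k·t) + Σ_{m=1}^∞ [ (m·N+k)^{−(1+r)}·cos((m·N+k)·t) + (−1)^{1+r}·(m·N−k)^{−(1+r)}·cos((m·N−k)·t) ] and the constant H = k^{−(1+r)} + Σ_{m=1}^∞ [ (m·N+k)^{−(1+r)} + (−1)^{1+r}·(m·N−k)^{−(1+r)} ]. Then for every node x_j = 2π(j−1)/N, j = 1,…,N, one has C(x_j) = H·cos(k·x_j). -/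
/-!
At a node `x = 2π i / N` the frequencies `m N + k` and `m N - k` alias to `k`: the arguments
`(m N ± k) x` and `± k x` differ by the multiple `m i` of `2π`. Hence every cosine of the series
`C` equals `cos (k x)`, which factors out of the series and leaves the constant `H`.
-/

open Real

lemma cos_int_mul_add_mul_two_pi_div (n i : ℤ) (N : ℕ) (a : ℝ) :
    cos ((n * N + a) * (2 * π * i / N)) = cos (a * (2 * π * i / N)) := by
  rcases Nat.eq_zero_or_pos N with rfl | hN
  · simp -- `x / 0 = 0`: both sides are `cos 0`
  have hshift : (n * N + a) * (2 * π * i / N) = a * (2 * π * i / N) + (n * i : ℤ) * (2 * π) := by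
    field_simp
    push_cast
    ring
  rw [hshift, cos_add_int_mul_two_pi]

lemma cos_int_mul_sub_mul_two_pi_div (n i : ℤ) (N : ℕ) (a : ℝ) :
    cos ((n * N - a) * (2 * π * i / N)) = cos (a * (2 * π * i / N)) := by
  rw [sub_eq_add_neg, cos_int_mul_add_mul_two_pi_div, neg_mul, cos_neg]

theorem cosine_component_at_nodes_general (r N k : ℕ)
    (C : ℝ → ℝ)
    (hC : ∀ t, C t = 1 / (k : ℝ) ^ (1 + r) * Real.cos ((k : ℝ) * t) +
      ∑' m : ℕ, (1 / (((m : ℝ) + 1) * N + k) ^ (1 + r) *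
            Real.cos ((((m : ℝ) + 1) * N + k) * t) +
          (-1 : ℝ) ^ (1 + r) * (1 / (((m : ℝ) + 1) * N - k) ^ (1 + r) *
            Real.cos ((((m : ℝ) + 1) * N - k) * t))))
    (H : ℝ)
    (hH : H = 1 / (k : ℝ) ^ (1 + r) +
      ∑' m : ℕ, (1 / (((m : ℝ) + 1) * N + k) ^ (1 + r) +
        (-1 : ℝ) ^ (1 + r) * (1 / (((m : ℝ) + 1) * N - k) ^ (1 + r))))
    (x : ℕ → ℝ) (hx : ∀ j, x j = 2 * Real.pi * ((j : ℝ) - 1) / N) :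
    ∀ j ∈ Finset.Icc 1 N, C (x j) = H * Real.cos ((k : ℝ) * x j) := by
  intro j _
  have hnode : x j = 2 * π * (((j : ℤ) - 1 : ℤ) : ℝ) / N := by rw [hx]; push_cast; ring
  have hplus (m : ℕ) : cos ((((m : ℝ) + 1) * N + k) * x j) = cos (k * x j) := by
    simpa [hnode] using cos_int_mul_add_mul_two_pi_div (m + 1) (j - 1) N k
  have hminus (m : ℕ) : cos ((((m : ℝ) + 1) * N - k) * x j) = cos (k * x j) := by
    simpa [hnode] using cos_int_mul_sub_mul_two_pi_div (m + 1) (j - 1) N k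
  rw [hC, hH, add_mul, ← tsum_mul_right]
  congr 1
  refine tsum_congr fun m => ?_
  rw [hplus, hminus]
  ring

/-- At the nodes of the uniform grid `x_j = 2π(j-1)/N`, the cosine component
series `C(t)` of the trigonometric interpolation spline of order `r` (with
convergence factor `σ1(r,k) = k^{-(1+r)}`) collapses, by aliasing, to
`H · cos(k x_j)` where `H` is the normalizing constant. -/
theorem cosine_component_at_nodes (r N k : ℕ) (hr : 1 ≤ r) (hN : 3 ≤ N)
    (hk1 : 1 ≤ k) (hk2 : k ≤ (N - 1) / 2)
    (C : ℝ → ℝ)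
    (hC : ∀ t, C t = 1 / (k : ℝ) ^ (1 + r) * Real.cos ((k : ℝ) * t) +
      ∑' m : ℕ, (1 / (((m : ℝ) + 1) * N + k) ^ (1 + r) *
            Real.cos ((((m : ℝ) + 1) * N + k) * t) +
          (-1 : ℝ) ^ (1 + r) * (1 / (((m : ℝ) + 1) * N - k) ^ (1 + r) *
            Real.cos ((((m : ℝ) + 1) * N - k) * t))))
    (H : ℝ)
    (hH : H = 1 / (k : ℝ) ^ (1 + r) +
      ∑' m : ℕ, (1 / (((m : ℝ) + 1) * N + k) ^ (1 + r) +
        (-1 : ℝ) ^ (1 + r) * (1 / (((m : ℝ) + 1) * N - k) ^ (1 + r))))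
    (x : ℕ → ℝ) (hx : ∀ j, x j = 2 * Real.pi * ((j : ℝ) - 1) / N) :
    ∀ j ∈ Finset.Icc 1 N, C (x j) = H * Real.cos ((k : ℝ) * x j) :=
  cosine_component_at_nodes_general r N k C hC H hH x hx
end

section
/- Let r ≥ 1, N ≥ 3 and 1 ≤ k ≤ (N−1)/2 be integers, and define for t ∈ ℝ the series S(t) = k^{−(1+r)}·sin(k·t) + Σ_{m=1}^∞ [ (m·N+k)^{−(1+r)}·sin((m·N+k)·t) − (−1)^{1+r}·(m·N−k)^{−(1+r)}·sin((m·N−k)·t) ] and the constant H = k^{−(1+r)} + Σ_{m=1}^∞ [ (m·N+k)^{−(1+r)} + (−1)^{1+r}·(m·N−k)^{−(1+r)} ]. Then for every node x_j = 2π(j−1)/N, j = 1,…,N, one has S(x_j) = H·sin(k·x_j). -/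
/-!
If `N t ∈ 2πℤ` (as at every node `t = 2π(j-1)/N`), then the harmonics `mN + k` and `mN - k`
take the values `sin(k t)` and `-sin(k t)` at `t`. Hence every term of `S(t)` is the
corresponding term of `H` times `sin(k t)`, and the factor comes out of the `tsum`
(`tsum_mul_right` needs no summability over a field).
-/

open Real

theorem sin_int_mul_add_mul_of_mul_eq {N t : ℝ} {n : ℤ} (ht : N * t = n * (2 * π))
    (M : ℤ) (s : ℝ) : sin ((M * N + s) * t) = sin (s * t) := by
  have h : (M * N + s) * t = s * t + ((M * n : ℤ) : ℝ) * (2 * π) := by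
    push_cast
    linear_combination (M : ℝ) * ht
  rw [h, sin_add_int_mul_two_pi]

theorem sin_int_mul_sub_mul_of_mul_eq {N t : ℝ} {n : ℤ} (ht : N * t = n * (2 * π))
    (M : ℤ) (s : ℝ) : sin ((M * N - s) * t) = -sin (s * t) := by
  rw [sub_eq_add_neg, sin_int_mul_add_mul_of_mul_eq ht, neg_mul, sin_neg]

theorem sine_component_at_nodes_general (r N k : ℕ)
    (S : ℝ → ℝ)
    (hS : ∀ t, S t = 1 / (k : ℝ) ^ (1 + r) * Real.sin ((k : ℝ) * t) +
      ∑' m : ℕ, (1 / (((m : ℝ) + 1) * N + k) ^ (1 + r) *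
            Real.sin ((((m : ℝ) + 1) * N + k) * t) -
          (-1 : ℝ) ^ (1 + r) * (1 / (((m : ℝ) + 1) * N - k) ^ (1 + r) *
            Real.sin ((((m : ℝ) + 1) * N - k) * t))))
    (H : ℝ)
    (hH : H = 1 / (k : ℝ) ^ (1 + r) +
      ∑' m : ℕ, (1 / (((m : ℝ) + 1) * N + k) ^ (1 + r) +
        (-1 : ℝ) ^ (1 + r) * (1 / (((m : ℝ) + 1) * N - k) ^ (1 + r))))
    (x : ℕ → ℝ) (hx : ∀ j, x j = 2 * Real.pi * ((j : ℝ) - 1) / N) :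
    ∀ j ∈ Finset.Icc 1 N, S (x j) = H * Real.sin ((k : ℝ) * x j) := by
  intro j hj
  have hN : (N : ℝ) ≠ 0 := Nat.cast_ne_zero.mpr (by grind)
  have hnode : (N : ℝ) * x j = ((j - 1 : ℤ) : ℝ) * (2 * π) := by
    rw [hx]
    field_simp
    push_cast
    ring
  have hplus (m : ℕ) : sin ((((m : ℝ) + 1) * N + k) * x j) = sin (k * x j) := by
    simpa using sin_int_mul_add_mul_of_mul_eq hnode (m + 1) k
  have hminus (m : ℕ) : sin ((((m : ℝ) + 1) * N - k) * x j) = -sin (k * x j) := by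
    simpa using sin_int_mul_sub_mul_of_mul_eq hnode (m + 1) k
  rw [hS, hH, add_mul, ← tsum_mul_right]
  congr 1
  refine tsum_congr fun m => ?_
  rw [hplus, hminus]
  ring

/-- At the nodes of the uniform grid `x_j = 2π(j-1)/N`, the sine component
series `S(t)` of the trigonometric interpolation spline of order `r` (with
convergence factor `σ1(r,k) = k^{-(1+r)}`) collapses, by aliasing, to
`H · sin(k x_j)` where `H` is the normalizing constant. -/
theorem sine_component_at_nodes (r N k : ℕ) (hr : 1 ≤ r) (hN : 3 ≤ N)
    (hk1 : 1 ≤ k) (hk2 : k ≤ (N - 1) / 2)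
    (S : ℝ → ℝ)
    (hS : ∀ t, S t = 1 / (k : ℝ) ^ (1 + r) * Real.sin ((k : ℝ) * t) +
      ∑' m : ℕ, (1 / (((m : ℝ) + 1) * N + k) ^ (1 + r) *
            Real.sin ((((m : ℝ) + 1) * N + k) * t) -
          (-1 : ℝ) ^ (1 + r) * (1 / (((m : ℝ) + 1) * N - k) ^ (1 + r) *
            Real.sin ((((m : ℝ) + 1) * N - k) * t))))
    (H : ℝ)
    (hH : H = 1 / (k : ℝ) ^ (1 + r) +
      ∑' m : ℕ, (1 / (((m : ℝ) + 1) * N + k) ^ (1 + r) +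
        (-1 : ℝ) ^ (1 + r) * (1 / (((m : ℝ) + 1) * N - k) ^ (1 + r))))
    (x : ℕ → ℝ) (hx : ∀ j, x j = 2 * Real.pi * ((j : ℝ) - 1) / N) :
    ∀ j ∈ Finset.Icc 1 N, S (x j) = H * Real.sin ((k : ℝ) * x j) :=
  sine_component_at_nodes_general r N k S hS H hH x hx
end

section
/- Let r ≥ 1 be an odd integer, N = 2n+1 with n ≥ 1, and x_j = 2π(j−1)/N for j = 1,…,N. Given f_1,…,f_N ∈ ℝ, set a_0 = (2/N)Σ_{j=1}^N f_j, a_k = (2/N)Σ_{j=1}^N f_j·cos(k·x_j), b_k = (2/N)Σ_{j=1}^N f_j·sin(k·x_j) for k = 1,…,n. For each k define H(k) = k^{−(1+r)} + Σ_{m=1}^∞ [(mN+k)^{−(1+r)} + (mN−k)^{−(1+r)}], C(k,t) = k^{−(1+r)}·cos(kt) + Σ_{m=1}^∞ [(mN+k)^{−(1+r)}·cos((mN+k)t) + (mN−k)^{−(1+r)}·cos((mN−k)t)], and S(k,t) = k^{−(1+r)}·sin(kt) + Σ_{m=1}^∞ [(mN+k)^{−(1+r)}·sin((mN+k)t) −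 (mN−k)^{−(1+r)}·sin((mN−k)t)]. Then the trigonometric spline St(t) = a_0/2 + Σ_{k=1}^n [ a_k·C(k,t)/H(k) + b_k·S(k,t)/H(k) ] satisfies St(x_j) = f_j for every j = 1,…,N. -/
private lemma kernel_sum (θ : ℝ) (n : ℕ) :
    Real.sin (θ/2) * (1 + 2 * ∑ k ∈ Finset.Icc 1 n, Real.cos ((k : ℝ) * θ)) =
      Real.sin ((2*(n:ℝ)+1) * (θ/2)) := by
  induction n with
  | zero => simp
  | succ n ih =>
    rw [Finset.sum_Icc_succ_top (by omega : 1 ≤ n + 1)]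
    have hs := Real.sin_sub_sin ((2*((n:ℝ)+1)+1) * (θ/2)) ((2*(n:ℝ)+1) * (θ/2))
    have e1 : ((2*((n:ℝ)+1)+1) * (θ/2) - (2*(n:ℝ)+1) * (θ/2))/2 = θ/2 := by ring
    have e2 : ((2*((n:ℝ)+1)+1) * (θ/2) + (2*(n:ℝ)+1) * (θ/2))/2 = ((n:ℝ)+1)*θ := by ring
    rw [e1, e2] at hs
    push_cast
    push_cast at ih
    nlinarith [ih, hs]

private lemma kernel_vanish (N n : ℕ) (hN : N = 2*n+1) (d : ℤ) (hd0 : d ≠ 0)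
    (hdN : d.natAbs < N) :
    (1 : ℝ) + 2 * ∑ k ∈ Finset.Icc 1 n, Real.cos ((k:ℝ) * (2*Real.pi*d/N)) = 0 := by
  have hks := kernel_sum (2*Real.pi*d/N) n
  have hNpos : (0:ℝ) < N := by
    have : 0 < N := by omega
    exact_mod_cast this
  have hNne : (N:ℝ) ≠ 0 := ne_of_gt hNpos
  have hhalf : (2*Real.pi*(d:ℝ)/N)/2 = (d:ℝ)*Real.pi/N := by ring
  have hNcast : (2*(n:ℝ)+1) = (N:ℝ) := by rw [hN]; push_cast; ring
  have hrhs : (2*(n:ℝ)+1) * ((2*Real.pi*(d:ℝ)/N)/2) = (d:ℝ)*Real.pi := by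
    rw [hNcast]; field_simp
  rw [hrhs] at hks
  have hsin0 : Real.sin ((d:ℝ)*Real.pi) = 0 := Real.sin_int_mul_pi d
  rw [hsin0] at hks
  have hne : Real.sin ((2*Real.pi*(d:ℝ)/N)/2) ≠ 0 := by
    rw [hhalf]
    intro h
    obtain ⟨m, hm⟩ := Real.sin_eq_zero_iff.mp h
    have hpi := Real.pi_ne_zero
    have h2 : (m:ℝ) * Real.pi * N = (d:ℝ) * Real.pi := by
      rw [hm]; field_simp
    have : (m:ℝ) * N = d := by
      apply mul_right_cancel₀ hpi
      nlinarith [h2]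
    have hmd : m * N = d := by exact_mod_cast this
    have hdvd : (N:ℤ) ∣ d := ⟨m, by linarith [hmd]⟩
    have : (N:ℤ) ≤ |d| := Int.le_of_dvd (abs_pos.mpr hd0) ((dvd_abs _ _).mpr hdvd)
    have : (N:ℤ) ≤ d.natAbs := by rwa [Int.abs_eq_natAbs] at this
    omega
  exact (mul_eq_zero.mp hks).resolve_left hne

/-- Interpolation property of the trigonometric spline `St(0,0,σ1,r,0,t)` of odd
order `r` with sign-constant convergence factor `σ1(r,k) = k^{-(1+r)}` on the
uniform grid `x_j = 2π(j-1)/N`, `N = 2n+1`. -/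
theorem trig_spline_interpolation (r : ℕ) (hr : 1 ≤ r) (hodd : Odd r)
    (n N : ℕ) (hn : 1 ≤ n) (hN : N = 2 * n + 1)
    (x : ℕ → ℝ) (hx : ∀ j, x j = 2 * Real.pi * ((j : ℝ) - 1) / N)
    (f : ℕ → ℝ) (a0 : ℝ) (a b : ℕ → ℝ)
    (ha0 : a0 = (2 / (N : ℝ)) * ∑ j ∈ Finset.Icc 1 N, f j)
    (ha : ∀ k, 1 ≤ k → k ≤ n →
      a k = (2 / (N : ℝ)) * ∑ j ∈ Finset.Icc 1 N, f j * Real.cos ((k : ℝ) * x j))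
    (hb : ∀ k, 1 ≤ k → k ≤ n →
      b k = (2 / (N : ℝ)) * ∑ j ∈ Finset.Icc 1 N, f j * Real.sin ((k : ℝ) * x j))
    (H : ℕ → ℝ)
    (hH : ∀ k, H k = 1 / (k : ℝ) ^ (1 + r) +
      ∑' m : ℕ, (1 / (((m : ℝ) + 1) * N + k) ^ (1 + r) +
        1 / (((m : ℝ) + 1) * N - k) ^ (1 + r)))
    (C : ℕ → ℝ → ℝ)
    (hC : ∀ k t, C k t = 1 / (k : ℝ) ^ (1 + r) * Real.cos ((k : ℝ) * t) +
      ∑' m : ℕ, (1 / (((m : ℝ) + 1) * N + k) ^ (1 + r) *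
            Real.cos ((((m : ℝ) + 1) * N + k) * t) +
          1 / (((m : ℝ) + 1) * N - k) ^ (1 + r) *
            Real.cos ((((m : ℝ) + 1) * N - k) * t)))
    (S : ℕ → ℝ → ℝ)
    (hS : ∀ k t, S k t = 1 / (k : ℝ) ^ (1 + r) * Real.sin ((k : ℝ) * t) +
      ∑' m : ℕ, (1 / (((m : ℝ) + 1) * N + k) ^ (1 + r) *
            Real.sin ((((m : ℝ) + 1) * N + k) * t) -
          1 / (((m : ℝ) + 1) * N - k) ^ (1 + r) *
            Real.sin ((((m : ℝ) + 1) * N - k) * t)))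
    (St : ℝ → ℝ)
    (hSt : ∀ t, St t = a0 / 2 +
      ∑ k ∈ Finset.Icc 1 n, (a k * C k t / H k + b k * S k t / H k)) :
    ∀ j ∈ Finset.Icc 1 N, St (x j) = f j := by
  intro j hj
  obtain ⟨hj1, hjN⟩ := Finset.mem_Icc.mp hj
  have hNn : 1 ≤ N := by omega
  have hNRpos : (0:ℝ) < N := by exact_mod_cast Nat.pos_of_ne_zero (by omega)
  have hNne : (N:ℝ) ≠ 0 := ne_of_gt hNRpos
  -- shift identities
  have hshift : ∀ (c : ℝ) (m : ℕ),
      (((m:ℝ)+1)*N + c) * x j = c * x j + ((((m:ℤ)+1)*((j:ℤ)-1) : ℤ) : ℝ) * (2*Real.pi) := by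
    intro c m
    rw [hx j]
    push_cast
    field_simp
    ring
  have hshift' : ∀ (c : ℝ) (m : ℕ),
      (((m:ℝ)+1)*N - c) * x j = -(c * x j) + ((((m:ℤ)+1)*((j:ℤ)-1) : ℤ) : ℝ) * (2*Real.pi) := by
    intro c m
    rw [hx j]
    push_cast
    field_simp
    ring
  have hcosp : ∀ (c : ℝ) (m : ℕ),
      Real.cos ((((m:ℝ)+1)*N + c) * x j) = Real.cos (c * x j) := by
    intro c m; rw [hshift c m, Real.cos_add_int_mul_two_pi]
  have hcosm : ∀ (c : ℝ) (m : ℕ),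
      Real.cos ((((m:ℝ)+1)*N - c) * x j) = Real.cos (c * x j) := by
    intro c m; rw [hshift' c m, Real.cos_add_int_mul_two_pi, Real.cos_neg]
  have hsinp : ∀ (c : ℝ) (m : ℕ),
      Real.sin ((((m:ℝ)+1)*N + c) * x j) = Real.sin (c * x j) := by
    intro c m; rw [hshift c m, Real.sin_add_int_mul_two_pi]
  have hsinm : ∀ (c : ℝ) (m : ℕ),
      Real.sin ((((m:ℝ)+1)*N - c) * x j) = -Real.sin (c * x j) := by
    intro c m; rw [hshift' c m, Real.sin_add_int_mul_two_pi, Real.sin_neg]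
  -- component functions at the node
  have hCj : ∀ k : ℕ, C k (x j) = H k * Real.cos ((k:ℝ) * x j) := by
    intro k
    rw [hC, hH]
    have h1 : ∀ m : ℕ,
        (1 / (((m : ℝ) + 1) * N + k) ^ (1 + r) * Real.cos ((((m : ℝ) + 1) * N + k) * x j) +
          1 / (((m : ℝ) + 1) * N - k) ^ (1 + r) * Real.cos ((((m : ℝ) + 1) * N - k) * x j)) =
        (1 / (((m : ℝ) + 1) * N + k) ^ (1 + r) + 1 / (((m : ℝ) + 1) * N - k) ^ (1 + r)) *
          Real.cos ((k:ℝ) * x j) := by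
      intro m; rw [hcosp k m, hcosm k m]; ring
    rw [tsum_congr h1, tsum_mul_right]
    ring
  have hSj : ∀ k : ℕ, S k (x j) = H k * Real.sin ((k:ℝ) * x j) := by
    intro k
    rw [hS, hH]
    have h1 : ∀ m : ℕ,
        (1 / (((m : ℝ) + 1) * N + k) ^ (1 + r) * Real.sin ((((m : ℝ) + 1) * N + k) * x j) -
          1 / (((m : ℝ) + 1) * N - k) ^ (1 + r) * Real.sin ((((m : ℝ) + 1) * N - k) * x j)) =
        (1 / (((m : ℝ) + 1) * N + k) ^ (1 + r) + 1 / (((m : ℝ) + 1) * N - k) ^ (1 + r)) *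
          Real.sin ((k:ℝ) * x j) := by
      intro m; rw [hsinp k m, hsinm k m]; ring
    rw [tsum_congr h1, tsum_mul_right]
    ring
  -- positivity of H
  have hHpos : ∀ k, 1 ≤ k → k ≤ n → 0 < H k := by
    intro k hk1 hkn
    rw [hH]
    have hkR : (0:ℝ) < k := by exact_mod_cast hk1
    have hkn' : (k:ℝ) ≤ n := by exact_mod_cast hkn
    have hNR : (N:ℝ) = 2*(n:ℝ)+1 := by rw [hN]; push_cast; ring
    have t1 : 0 < 1 / (k:ℝ) ^ (1 + r) := by positivity
    have t2 : 0 ≤ ∑' m : ℕ, (1 / (((m : ℝ) + 1) * N + k) ^ (1 + r) +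
        1 / (((m : ℝ) + 1) * N - k) ^ (1 + r)) := by
      apply tsum_nonneg
      intro m
      have hm0 : (0:ℝ) ≤ m := Nat.cast_nonneg m
      have hA : (0:ℝ) < ((m:ℝ)+1)*N + k := by nlinarith
      have hB : (0:ℝ) < ((m:ℝ)+1)*N - k := by nlinarith
      positivity
    linarith
  -- reduce each spline term
  rw [hSt]
  have hterm : ∀ k ∈ Finset.Icc 1 n,
      a k * C k (x j) / H k + b k * S k (x j) / H k =
      ∑ l ∈ Finset.Icc 1 N, (2/(N:ℝ)) * f l * Real.cos ((k:ℝ) * (x j - x l)) := by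
    intro k hk
    obtain ⟨hk1, hkn⟩ := Finset.mem_Icc.mp hk
    have hH0 : H k ≠ 0 := (hHpos k hk1 hkn).ne'
    rw [hCj k, hSj k]
    have e1 : a k * (H k * Real.cos ((k:ℝ) * x j)) / H k +
        b k * (H k * Real.sin ((k:ℝ) * x j)) / H k =
        a k * Real.cos ((k:ℝ) * x j) + b k * Real.sin ((k:ℝ) * x j) := by
      field_simp
    rw [e1, ha k hk1 hkn, hb k hk1 hkn]
    have e2 : ∀ l ∈ Finset.Icc 1 N,
        (2/(N:ℝ)) * f l * Real.cos ((k:ℝ) * (x j - x l)) =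
        (2/(N:ℝ)) * (f l * Real.cos ((k:ℝ) * x l)) * Real.cos ((k:ℝ) * x j) +
        (2/(N:ℝ)) * (f l * Real.sin ((k:ℝ) * x l)) * Real.sin ((k:ℝ) * x j) := by
      intro l _
      rw [mul_sub, Real.cos_sub]
      ring
    rw [Finset.sum_congr rfl e2, Finset.sum_add_distrib, ← Finset.sum_mul, ← Finset.sum_mul,
      ← Finset.mul_sum, ← Finset.mul_sum]
  rw [Finset.sum_congr rfl hterm, Finset.sum_comm, ha0]
  have e3 : (2/(N:ℝ)) * (∑ l ∈ Finset.Icc 1 N, f l) / 2 =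
      ∑ l ∈ Finset.Icc 1 N, f l * (1/(N:ℝ)) := by
    rw [Finset.mul_sum, Finset.sum_div]
    exact Finset.sum_congr rfl fun l _ => by ring
  rw [e3, ← Finset.sum_add_distrib]
  have hg : ∀ l, f l * (1/(N:ℝ)) +
      ∑ k ∈ Finset.Icc 1 n, (2/(N:ℝ)) * f l * Real.cos ((k:ℝ) * (x j - x l)) =
      f l * ((1 + 2 * ∑ k ∈ Finset.Icc 1 n, Real.cos ((k:ℝ) * (x j - x l)))/(N:ℝ)) := by
    intro l
    have : ∑ k ∈ Finset.Icc 1 n, (2/(N:ℝ)) * f l * Real.cos ((k:ℝ) * (x j - x l)) =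
        (2/(N:ℝ)) * f l * ∑ k ∈ Finset.Icc 1 n, Real.cos ((k:ℝ) * (x j - x l)) := by
      rw [Finset.mul_sum]
    rw [this]
    ring
  rw [Finset.sum_congr rfl fun l _ => hg l]
  have hzero : ∀ l ∈ Finset.Icc 1 N, l ≠ j →
      f l * ((1 + 2 * ∑ k ∈ Finset.Icc 1 n, Real.cos ((k:ℝ) * (x j - x l)))/(N:ℝ)) = 0 := by
    intro l hl hlj
    obtain ⟨hl1, hlN⟩ := Finset.mem_Icc.mp hl
    set d : ℤ := (j:ℤ) - (l:ℤ) with hd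
    have hd0 : d ≠ 0 := by
      intro h
      apply hlj
      omega
    have hdN : d.natAbs < N := by omega
    have hxd : x j - x l = 2*Real.pi*(d:ℝ)/N := by
      rw [hx j, hx l, hd]
      push_cast
      field_simp
      ring
    rw [hxd, kernel_vanish N n (by omega) d hd0 hdN]
    simp
  rw [Finset.sum_eq_single_of_mem j hj hzero]
  · -- value at l = j
    have : x j - x j = 0 := by ring
    rw [this]
    have : ∀ k ∈ Finset.Icc 1 n, Real.cos ((k:ℝ) * 0) = 1 := by
      intro k _; rw [mul_zero, Real.cos_zero]
    rw [Finset.sum_congr rfl this, Finset.sum_const, Nat.card_Icc]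
    have hNR : (N:ℝ) = 2*(n:ℝ)+1 := by rw [hN]; push_cast; ring
    simp only [Nat.add_sub_cancel, nsmul_eq_mul]
    rw [hNR]
    have hone : (1 + 2*((n:ℝ)*1))/(2*(n:ℝ)+1) = 1 := by
      rw [div_eq_one_iff_eq (by positivity)]
      ring
    rw [hone, mul_one]
end
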